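/- Let X be a quasi-reflexive real Banach space, let y* ∈ X*, and let (x_n*)_{n=1}^∞ be a bounded sequence in X* such that ⋂_{n=1}^∞ ker(x_n*) ⊆ ker(y*). Then there exist a sequence (z_n*)_{n=1}^∞ enumerating the (countable) set of all finite rational linear combinations of the x_n* that lie in the closed unit ball of X*, and a bounded linear functional F on ℓ∞ (the space of bounded real sequences with the supremum norm), such that for every x ∈ X one has ⟨y*, x⟩ = F((⟨z_n*, x⟩)_{n=1}^∞). -/

import Mathlib

open NormedSpace ENNReal

/-- A real Banach space is quasi-reflexive if the image of the canonical
embedding into the bidual has finite codimension in the bidual. -/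
def IsQuasiReflexiveSpace (X : Type*) [NormedAddCommGroup X] [NormedSpace ℝ X] : Prop :=
  FiniteDimensional ℝ
    (StrongDual ℝ (StrongDual ℝ X) ⧸ LinearMap.range (inclusionInDoubleDual ℝ X : X →ₗ[ℝ] StrongDual ℝ (StrongDual ℝ X)))

/-!
Put `T ξ = (⟨zₙ*, ξ⟩)ₙ ∈ ℓ∞`. It suffices to show `|⟨y*, ξ⟩| ≤ C ‖T ξ‖`: then `y* ∘ T⁻¹` is bounded
on the range of `T`, and Hahn–Banach extends it to `ℓ∞`. As the rational span is dense in the real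
span `N` of the `xₙ*`, the functional `ξ ∈ X**` has norm at most `‖T ξ‖` on `N`, so Hahn–Banach
gives `Φ ∈ N^⊥ ⊆ X**` with `‖ξ - Φ‖ ≤ ‖T ξ‖`. Since `X` has finite codimension in `X**`, the
annihilator `N^⊥` is a finite-dimensional `G` plus `N^⊥ ∩ X`, and the closed subspace `X` sits at a
positive angle to `G`. Hence `Φ` can be traded for some `η ∈ N^⊥ ∩ X = ⋂ ker xₙ*` with
`‖ξ - η‖ ≤ C ‖T ξ‖`, and `⟨y*, ξ⟩ = ⟨y*, ξ - η⟩`.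
-/

open Metric Set Submodule

theorem span_real_subset_closure_span_rat {E : Type*} [TopologicalSpace E] [AddCommGroup E]
    [ContinuousAdd E] [Module ℝ E] [ContinuousSMul ℝ E] [Module ℚ E] (s : Set E) :
    (span ℝ s : Set E) ⊆ closure (span ℚ s) := by
  intro w hw
  induction hw using Submodule.span_induction with
  | mem v hv => exact subset_closure (subset_span hv)
  | zero => exact subset_closure (zero_mem _)
  | add u v _ _ hu hv => exact map_mem_closure₂ continuous_add hu hv fun _ ha _ hb => add_mem ha hb
  | smul r v _ hv =>
    refine map_mem_closure₂ continuous_smul (Rat.denseRange_cast r) hv ?_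
    rintro - ⟨q, rfl⟩ u hu
    rw [ratCast_smul_eq ℝ ℚ q u, Rat.cast_id]
    exact smul_mem _ q hu

theorem opNorm_comp_span_subtypeL_le_of_span_rat {E : Type*} [NormedAddCommGroup E]
    [NormedSpace ℝ E] [Module ℚ E] (f : StrongDual ℝ E) (s : Set E) {B : ℝ}
    (hB : ∀ w ∈ (span ℚ s : Set E) ∩ closedBall 0 1, ‖f w‖ ≤ B) :
    ‖f.comp (span ℝ s).subtypeL‖ ≤ B := by
  refine le_of_not_gt fun hlt => ?_
  obtain ⟨v, hv, hBv⟩ := (f.comp (span ℝ s).subtypeL).exists_lt_apply_of_lt_opNorm hlt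
  have hv' : (v : E) ∈ closure (ball 0 1 ∩ span ℚ s) :=
    isOpen_ball.inter_closure ⟨by simpa using hv, span_real_subset_closure_span_rat s v.2⟩
  have hclosed : IsClosed {u : E | ‖f u‖ ≤ B} := isClosed_le f.continuous.norm continuous_const
  have hfv : ‖f v‖ ≤ B := closure_minimal (fun u hu => hB u ⟨hu.2, ball_subset_closedBall hu.1⟩)
    hclosed hv'
  exact hBv.not_ge hfv

theorem exists_annihilator_norm_sub_eq {𝕜 E : Type*} [RCLike 𝕜] [NormedAddCommGroup E]
    [NormedSpace 𝕜 E] (φ : StrongDual 𝕜 E) (N : Submodule 𝕜 E) :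
    ∃ ψ : StrongDual 𝕜 E, (∀ v ∈ N, ψ v = 0) ∧ ‖φ - ψ‖ = ‖φ.comp N.subtypeL‖ := by
  obtain ⟨Ψ, hΨ, hΨnorm⟩ := exists_extension_norm_eq N (φ.comp N.subtypeL)
  refine ⟨φ - Ψ, fun v hv => ?_, by rw [sub_sub_self, hΨnorm]⟩
  simpa [sub_eq_zero] using (hΨ ⟨v, hv⟩).symm

theorem Submodule.exists_finiteDimensional_disjoint_le_sup {K V : Type*} [DivisionRing K]
    [AddCommGroup V] [Module K V] (R A : Submodule K V) [FiniteDimensional K (V ⧸ R)] :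
    ∃ G ≤ A, FiniteDimensional K G ∧ Disjoint R G ∧ A ≤ G ⊔ R := by
  obtain ⟨G, hGA, hdisj, hsup⟩ :=
    Set.Iic.complementedLattice_iff.mp inferInstance (A ⊓ R) inf_le_left
  have hRG : Disjoint R G :=
    disjoint_iff.2 (eq_bot_iff.2 (hdisj ▸ le_inf (le_inf (inf_le_right.trans hGA) inf_le_left)
      inf_le_right))
  have hinj : Function.Injective (R.mkQ ∘ₗ G.subtype) := by
    rw [← LinearMap.ker_eq_bot, LinearMap.ker_comp, ker_mkQ, ← disjoint_iff_comap_eq_bot]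
    exact hRG.symm
  exact ⟨G, hGA, Module.Finite.of_injective _ hinj, hRG,
    hsup ▸ sup_le (inf_le_right.trans le_sup_right) le_sup_left⟩

theorem exists_pos_mul_norm_le_norm_add_of_disjoint {𝕜 E : Type*} [NontriviallyNormedField 𝕜]
    [CompleteSpace 𝕜] [NormedAddCommGroup E] [NormedSpace 𝕜 E] {R G : Submodule 𝕜 E}
    (hR : IsClosed (R : Set E)) [FiniteDimensional 𝕜 G] (hRG : Disjoint R G) :
    ∃ c > 0, ∀ r ∈ R, ∀ g ∈ G, c * ‖r‖ ≤ ‖r + g‖ := by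
  have hker : LinearMap.ker (R.mkQ ∘ₗ G.subtype) = ⊥ := by
    rw [LinearMap.ker_comp, ker_mkQ, ← disjoint_iff_comap_eq_bot]
    exact hRG.symm
  -- The quotient map by `R` kills `r` and is injective, hence antilipschitz, on `G`.
  obtain ⟨K, -, hK⟩ := (R.mkQ ∘ₗ G.subtype).exists_antilipschitzWith hker
  have hg : ∀ r ∈ R, ∀ g ∈ G, ‖g‖ ≤ K * ‖r + g‖ := by
    intro r hr g hg
    have hmk : R.mkQ g = R.mkQ (r + g) := by
      rw [map_add, (mkQ_apply R r).trans ((Quotient.mk_eq_zero R).2 hr), zero_add]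
    calc ‖g‖ = ‖(⟨g, hg⟩ : G)‖ := rfl
      _ ≤ K * ‖R.mkQ (r + g)‖ := hmk ▸ ZeroHomClass.bound_of_antilipschitz _ hK _
      _ ≤ K * ‖r + g‖ := by gcongr; exact Quotient.norm_mk_le R _
  refine ⟨(1 + K)⁻¹, by positivity, fun r hr g hgG => ?_⟩
  rw [inv_mul_le_iff₀ (by positivity)]
  calc ‖r‖ ≤ ‖r + g‖ + ‖g‖ := norm_le_add_norm_add r g
    _ ≤ (1 + K) * ‖r + g‖ := by linarith [hg r hr g hgG]

theorem exists_pos_mul_norm_sub_le_of_finiteDimensional_quotient {𝕜 E : Type*}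
    [NontriviallyNormedField 𝕜] [CompleteSpace 𝕜] [NormedAddCommGroup E] [NormedSpace 𝕜 E]
    {R : Submodule 𝕜 E} (hR : IsClosed (R : Set E)) [FiniteDimensional 𝕜 (E ⧸ R)]
    (A : Submodule 𝕜 E) :
    ∃ c > 0, ∀ r ∈ R, ∀ a ∈ A, ∃ r' ∈ A ⊓ R, c * ‖r - r'‖ ≤ ‖r - a‖ := by
  obtain ⟨G, hGA, hG, hRG, hAGR⟩ := R.exists_finiteDimensional_disjoint_le_sup A
  obtain ⟨c, hc, hcRG⟩ := exists_pos_mul_norm_le_norm_add_of_disjoint hR hRG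
  refine ⟨c, hc, fun r hr a ha => ?_⟩
  obtain ⟨g, hg, s, hs, rfl⟩ := mem_sup.1 (hAGR ha)
  have hsA : s ∈ A := by simpa using A.sub_mem ha (hGA hg)
  refine ⟨s, ⟨hsA, hs⟩, ?_⟩
  have hsplit : r - s + -g = r - (g + s) := by abel
  simpa [hsplit] using hcRG (r - s) (R.sub_mem hr hs) (-g) (G.neg_mem hg)

theorem LinearMap.exists_strongDual_apply_eq_of_norm_le {𝕜 E V : Type*} [RCLike 𝕜] [AddCommGroup E]
    [Module 𝕜 E] [NormedAddCommGroup V] [NormedSpace 𝕜 V] (T : E →ₗ[𝕜] V) (y : E →ₗ[𝕜] 𝕜)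
    {C : ℝ} (hC : ∀ ξ, ‖y ξ‖ ≤ C * ‖T ξ‖) :
    ∃ F : StrongDual 𝕜 V, ∀ ξ, F (T ξ) = y ξ := by
  have hker : LinearMap.ker T ≤ LinearMap.ker y := fun ξ hξ => by
    simpa [LinearMap.mem_ker.1 hξ] using hC ξ
  let ψ : LinearMap.range T →ₗ[𝕜] 𝕜 := (LinearMap.ker T).liftQ y hker ∘ₗ T.quotKerEquivRange.symm
  have hψ : ∀ ξ, ψ ⟨T ξ, LinearMap.mem_range_self T ξ⟩ = y ξ := fun ξ => by
    simp [ψ, LinearMap.quotKerEquivRange_symm_apply_image]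
  obtain ⟨F, hF, -⟩ := exists_extension_norm_eq _ (ψ.mkContinuous C (by
    rintro ⟨-, ξ, rfl⟩
    exact (congrArg norm (hψ ξ)).trans_le (hC ξ)))
  exact ⟨F, fun ξ => (hF ⟨T ξ, LinearMap.mem_range_self T ξ⟩).trans (hψ ξ)⟩

section BoundedFamily

variable {ι X : Type*} [NormedAddCommGroup X] [NormedSpace ℝ X] {z : ι → StrongDual ℝ X} {C : ℝ}

theorem memℓp_infty_apply_of_norm_le (hz : ∀ i, ‖z i‖ ≤ C) (ξ : X) :
    Memℓp (fun i => z i ξ) ∞ :=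
  memℓp_infty ⟨C * ‖ξ‖, by rintro - ⟨i, rfl⟩; exact (z i).le_of_opNorm_le (hz i) ξ⟩

def evalToLpInfty (hz : ∀ i, ‖z i‖ ≤ C) : X →ₗ[ℝ] lp (fun _ : ι => ℝ) ∞ where
  toFun ξ := ⟨fun i => z i ξ, memℓp_infty_apply_of_norm_le hz ξ⟩
  map_add' a b := Subtype.ext <| funext fun i => map_add (z i) a b
  map_smul' r a := Subtype.ext <| funext fun i => map_smul (z i) r a

theorem norm_apply_le_norm_evalToLpInfty (hz : ∀ i, ‖z i‖ ≤ C) (ξ : X) (i : ι) :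
    ‖z i ξ‖ ≤ ‖evalToLpInfty hz ξ‖ :=
  lp.norm_apply_le_norm ENNReal.top_ne_zero (evalToLpInfty hz ξ) i

end BoundedFamily

theorem IsQuasiReflexiveSpace.exists_pos_mul_norm_sub_le {X : Type*} [NormedAddCommGroup X]
    [NormedSpace ℝ X] [CompleteSpace X] (hqr : IsQuasiReflexiveSpace X)
    (A : Submodule ℝ (StrongDual ℝ (StrongDual ℝ X))) :
    ∃ c > 0, ∀ ξ : X, ∀ Φ ∈ A, ∃ η : X,
      inclusionInDoubleDual ℝ X η ∈ A ∧ c * ‖ξ - η‖ ≤ ‖inclusionInDoubleDual ℝ X ξ - Φ‖ := by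
  have : FiniteDimensional ℝ _ := hqr
  have hR : IsClosed (↑(LinearMap.range (inclusionInDoubleDual ℝ X :
      X →ₗ[ℝ] StrongDual ℝ (StrongDual ℝ X))) : Set (StrongDual ℝ (StrongDual ℝ X))) := by
    have hJ : Isometry (inclusionInDoubleDualLi ℝ (E := X)) := LinearIsometry.isometry _
    rw [LinearMap.coe_range]
    exact hJ.isClosedEmbedding.isClosed_range
  obtain ⟨c, hc, hcA⟩ := exists_pos_mul_norm_sub_le_of_finiteDimensional_quotient
    (𝕜 := ℝ) (E := StrongDual ℝ (StrongDual ℝ X)) hR A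
  refine ⟨c, hc, fun ξ Φ hΦ => ?_⟩
  obtain ⟨-, ⟨hA, η, rfl⟩, hη⟩ := hcA _ ⟨ξ, rfl⟩ Φ hΦ
  simp only [ContinuousLinearMap.coe_coe] at hA hη
  refine ⟨η, hA, ?_⟩
  have hJ : ‖inclusionInDoubleDual ℝ X ξ - inclusionInDoubleDual ℝ X η‖ = ‖ξ - η‖ := by
    rw [← map_sub]; exact (inclusionInDoubleDualLi ℝ).norm_map _
  rwa [hJ] at hη

theorem IsQuasiReflexiveSpace.exists_norm_apply_le_of_iInter_ker_subset {ι X : Type*}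
    [NormedAddCommGroup X] [NormedSpace ℝ X] [CompleteSpace X] (hqr : IsQuasiReflexiveSpace X)
    (y : StrongDual ℝ X) (x : ι → StrongDual ℝ X)
    (hker : (⋂ i, LinearMap.ker (x i : X →ₗ[ℝ] ℝ) : Set X) ⊆ LinearMap.ker (y : X →ₗ[ℝ] ℝ)) :
    ∃ C, ∀ (ξ : X) (B : ℝ),
      (∀ w ∈ (span ℚ (range x) : Set (StrongDual ℝ X)) ∩ closedBall 0 1, ‖w ξ‖ ≤ B) →
        ‖y ξ‖ ≤ C * B := by
  let A : Submodule ℝ (StrongDual ℝ (StrongDual ℝ X)) :=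
    ⨅ i, LinearMap.ker (inclusionInDoubleDual ℝ (StrongDual ℝ X) (x i) : _ →ₗ[ℝ] ℝ)
  obtain ⟨c, hc, hcA⟩ := hqr.exists_pos_mul_norm_sub_le A
  refine ⟨‖y‖ / c, fun ξ B hB => ?_⟩
  obtain ⟨Φ, hΦ, hΦξ⟩ :=
    exists_annihilator_norm_sub_eq (inclusionInDoubleDual ℝ X ξ) (span ℝ (range x))
  have hΦB : ‖inclusionInDoubleDual ℝ X ξ - Φ‖ ≤ B :=
    hΦξ.trans_le (opNorm_comp_span_subtypeL_le_of_span_rat _ _ hB)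
  obtain ⟨η, hηA, hη⟩ := hcA ξ Φ <| (mem_iInf _).2 fun i => hΦ _ (subset_span ⟨i, rfl⟩)
  have hyη : y η = 0 := hker <| mem_iInter.2 fun i => (mem_iInf _).1 hηA i
  calc ‖y ξ‖ = ‖y (ξ - η)‖ := by rw [map_sub, hyη, sub_zero]
    _ ≤ ‖y‖ * ‖ξ - η‖ := y.le_opNorm _
    _ ≤ ‖y‖ * (B / c) := by
      gcongr
      rw [le_div_iff₀ hc, mul_comm]
      exact hη.trans hΦB
    _ = ‖y‖ / c * B := by ring

theorem quasiReflexive_generalized_combination_general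
    (X : Type*) [NormedAddCommGroup X] [NormedSpace ℝ X] [CompleteSpace X]
    (hqr : IsQuasiReflexiveSpace X)
    (y : StrongDual ℝ X) (x : ℕ → StrongDual ℝ X)
    (hker : (⋂ n, LinearMap.ker (x n : X →ₗ[ℝ] ℝ) : Set X) ⊆ (LinearMap.ker (y : X →ₗ[ℝ] ℝ) : Set X)) :
    ∃ z : ℕ → StrongDual ℝ X,
      Set.range z =
        (Submodule.span ℚ (Set.range x) : Set (StrongDual ℝ X)) ∩ Metric.closedBall 0 1 ∧
      ∃ F : lp (fun _ : ℕ => ℝ) ∞ →L[ℝ] ℝ,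
        ∀ ξ : X, ∃ h : Memℓp (fun n => z n ξ) ∞,
          y ξ = F ⟨fun n => z n ξ, h⟩ := by
  set S := (span ℚ (range x) : Set (StrongDual ℝ X)) ∩ closedBall 0 1
  obtain ⟨z, hz⟩ : ∃ z : ℕ → StrongDual ℝ X, S = range z :=
    ((countable_coe_iff.1 (inferInstance : Countable (span ℚ (range x)))).mono
      inter_subset_left).exists_eq_range
      ⟨0, zero_mem _, mem_closedBall_self zero_le_one⟩
  have hz₁ : ∀ n, ‖z n‖ ≤ 1 := fun n => mem_closedBall_zero_iff.1 (hz ▸ mem_range_self n).2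
  obtain ⟨C, hC⟩ := hqr.exists_norm_apply_le_of_iInter_ker_subset y x hker
  obtain ⟨F, hF⟩ := (evalToLpInfty hz₁).exists_strongDual_apply_eq_of_norm_le (y : X →ₗ[ℝ] ℝ)
    fun ξ => hC ξ _ <| by
      intro w hw
      obtain ⟨n, rfl⟩ : w ∈ range z := hz ▸ (hw : w ∈ S)
      exact norm_apply_le_norm_evalToLpInfty hz₁ ξ n
  exact ⟨z, hz.symm, F, fun ξ => ⟨_, (hF ξ).symm⟩⟩

/-- Let `X` be a quasi-reflexive real Banach space, `y* ∈ X*`, and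
`(xₙ*)` a bounded sequence in `X*` with `⋂ₙ ker xₙ* ⊆ ker y*`.  Then there are
an enumeration `(zₙ*)` of the set of finite rational linear combinations of
the `xₙ*` lying in the closed unit ball of `X*`, and a bounded linear
functional `F` on `ℓ∞` such that `⟨y*, x⟩ = F((⟨zₙ*, x⟩)ₙ)` for every `x ∈ X`. -/
theorem quasiReflexive_generalized_combination
    (X : Type*) [NormedAddCommGroup X] [NormedSpace ℝ X] [CompleteSpace X]
    (hqr : IsQuasiReflexiveSpace X)
    (y : StrongDual ℝ X) (x : ℕ → StrongDual ℝ X)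
    (hbdd : ∃ C : ℝ, ∀ n, ‖x n‖ ≤ C)
    (hker : (⋂ n, LinearMap.ker (x n : X →ₗ[ℝ] ℝ) : Set X) ⊆ (LinearMap.ker (y : X →ₗ[ℝ] ℝ) : Set X)) :
    ∃ z : ℕ → StrongDual ℝ X,
      Set.range z =
        (Submodule.span ℚ (Set.range x) : Set (StrongDual ℝ X)) ∩ Metric.closedBall 0 1 ∧
      ∃ F : lp (fun _ : ℕ => ℝ) ∞ →L[ℝ] ℝ,
        ∀ ξ : X, ∃ h : Memℓp (fun n => z n ξ) ∞,
          y ξ = F ⟨fun n => z n ξ, h⟩ :=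
  quasiReflexive_generalized_combination_general X hqr y x hker
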